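/- Let 𝒜 be a finite nonempty set of attributes, each a function a : X → [0,1] on a set X of instances, and let μ be a monotone measure on 𝒜. Then for all x, y ∈ X, the Choquet similarity and the Choquet distance with respect to the dual measure satisfy R^μ(x, y) = μ(𝒜) − d^{μ̄}(x, y). -/

import Mathlib

/-!
For a fixed enumeration the Choquet sum is linear in the integrand, and a constant `c`
integrates to `c * (μ 𝒜 - μ ∅)`; so `R^μ(x, y) = μ(𝒜) - ∫ d dμ` with `d a = |a(x) - a(y)|`,
the sum being taken along an enumeration that sorts `d` decreasingly. Reading that enumeration
backwards turns its tail sets into complements of tail sets, so the same sum is the Choquet sum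
of `d` against `μ̄` along an enumeration sorting `d` increasingly. Finally, a Choquet sum does not
depend on the sorting enumeration: two of them give the same sorted values, and their tail sets
agree after every strict increase of those values, so the difference of the sums vanishes by
summation by parts.
-/

open Finset

/-- The set `{x*_k, …, x*_{n-1}}` (0-indexed): the image under the enumeration `e`
of the indices `≥ k`. -/
def upSet {X : Type*} [DecidableEq X] {n : ℕ} (e : Fin n ≃ X) (k : ℕ) : Finset X :=
  (Finset.univ.filter fun j : Fin n => k ≤ (j : ℕ)).image e

/-- The Choquet integral of `f` with respect to the set function `μ`, computed via an
enumeration `e : Fin n ≃ X` (assumed to sort `f` nondecreasingly):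
`∑ i, f(x*_i) · [μ(A*_i) − μ(A*_{i+1})]` where `A*_i = {x*_i, …, x*_{n-1}}`
(note `A*_n = ∅`, and `μ ∅ = 0` for a monotone measure). -/
def choquetSum {X : Type*} [DecidableEq X] {n : ℕ} (μ : Finset X → ℝ) (f : X → ℝ)
    (e : Fin n ≃ X) : ℝ :=
  ∑ i : Fin n, f (e i) * (μ (upSet e i) - μ (upSet e ((i : ℕ) + 1)))

/-- The dual measure `μ̄(A) := μ(X) − μ(X \ A)`. -/
def dualMeasure {X : Type*} [Fintype X] [DecidableEq X] (μ : Finset X → ℝ) :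
    Finset X → ℝ :=
  fun A => μ Finset.univ - μ (Finset.univ \ A)

section
variable {X : Type*} [DecidableEq X] {n : ℕ}

@[simp]
lemma mem_upSet (e : Fin n ≃ X) (k : ℕ) (a : X) : a ∈ upSet e k ↔ k ≤ (e.symm a : ℕ) := by
  simp only [upSet, mem_image, mem_filter, mem_univ, true_and]
  exact ⟨fun ⟨j, hj, hja⟩ => hja ▸ by simpa using hj, fun h => ⟨e.symm a, h, e.apply_symm_apply a⟩⟩

lemma upSet_zero [Fintype X] (e : Fin n ≃ X) : upSet e 0 = univ := by
  ext a; simp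

lemma upSet_of_le (e : Fin n ≃ X) {k : ℕ} (hk : n ≤ k) : upSet e k = ∅ := by
  ext a; simpa using (e.symm a).isLt.trans_le hk

lemma sdiff_upSet_revPerm_trans [Fintype X] (e : Fin n ≃ X) (k : ℕ) :
    univ \ upSet (Fin.revPerm.trans e) k = upSet e (n - k) := by
  ext a
  have := (e.symm a).isLt
  simp only [mem_sdiff, mem_univ, mem_upSet, Equiv.symm_trans, Fin.revPerm_symm,
    Equiv.trans_apply, Fin.revPerm_apply, Fin.val_rev, true_and]
  omega

lemma upSet_eq_filter_lt [Fintype X] {f : X → ℝ} {e : Fin n ≃ X} (he : Monotone fun i => f (e i))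
    {i j : Fin n} (hij : (j : ℕ) = i + 1) (hlt : f (e i) < f (e j)) :
    upSet e j = univ.filter fun a => f (e i) < f a := by
  ext a
  rw [mem_upSet, hij, mem_filter, Nat.add_one_le_iff, ← Fin.lt_def]
  refine ⟨fun h => ⟨mem_univ a, ?_⟩, fun h => ?_⟩
  · simpa using hlt.trans_le (he (Fin.le_def.2 (by omega : (j : ℕ) ≤ e.symm a)))
  · by_contra! hle
    simpa using (he hle).trans_lt h.2

lemma choquetSum_sub (ν : Finset X → ℝ) (f g : X → ℝ) (e : Fin n ≃ X) :
    choquetSum ν (fun a => f a - g a) e = choquetSum ν f e - choquetSum ν g e := by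
  simp only [choquetSum, sub_mul, sum_sub_distrib]

lemma choquetSum_const [Fintype X] (ν : Finset X → ℝ) (c : ℝ) (e : Fin n ≃ X) :
    choquetSum ν (fun _ => c) e = c * (ν univ - ν ∅) := by
  rw [choquetSum, ← mul_sum,
    Fin.sum_univ_eq_sum_range (fun k => ν (upSet e k) - ν (upSet e (k + 1))),
    sum_range_sub' (fun k => ν (upSet e k)), upSet_zero, upSet_of_le e le_rfl]

lemma choquetSum_dualMeasure_revPerm_trans [Fintype X] (ν : Finset X → ℝ) (f : X → ℝ)
    (e : Fin n ≃ X) : choquetSum (dualMeasure ν) f (Fin.revPerm.trans e) = choquetSum ν f e := by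
  refine Fintype.sum_equiv Fin.revPerm _ _ fun j => ?_
  have h₁ : n - ((j : ℕ) + 1) = j.rev := (Fin.val_rev j).symm
  have h₂ : n - (j : ℕ) = j.rev + 1 := by rw [Fin.val_rev]; omega
  simp only [dualMeasure, sdiff_upSet_revPerm_trans, h₁, h₂, Equiv.trans_apply, Fin.revPerm_apply]
  ring

/-- Summation by parts: `v i * D (i + 1) = v (i + 1) * D (i + 1)` for every `i`. -/
lemma sum_mul_sub_succ_eq_zero (v : Fin n → ℝ) (D : ℕ → ℝ) (h0 : D 0 = 0) (hn : D n = 0)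
    (hstep : ∀ i j : Fin n, (j : ℕ) = i + 1 → v i = v j ∨ D j = 0) :
    ∑ i, v i * (D i - D (i + 1)) = 0 := by
  cases n with
  | zero => simp
  | succ m =>
    have hshift : ∀ i : Fin m, v i.castSucc * D (i + 1) = v i.succ * D (i + 1) := fun i => by
      rcases hstep i.castSucc i.succ (by simp) with h | h
      · rw [h]
      · rw [← Fin.val_succ, h, mul_zero, mul_zero]
    simp only [mul_sub, sum_sub_distrib]
    rw [Fin.sum_univ_succ, Fin.sum_univ_castSucc]
    simp [h0, hn, hshift]

lemma choquetSum_eq_of_monotone [Fintype X] (ν : Finset X → ℝ) (f : X → ℝ) {e e' : Fin n ≃ X}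
    (he : Monotone fun i => f (e i)) (he' : Monotone fun i => f (e' i)) :
    choquetSum ν f e = choquetSum ν f e' := by
  have hv : ∀ i, f (e i) = f (e' i) := fun i => by
    simpa using congrFun (Tuple.unique_monotone (f := f ∘ e') (σ := e.trans e'.symm)
      (τ := Equiv.refl _) (by simpa [Function.comp_def] using he) he') i
  rw [← sub_eq_zero, choquetSum, choquetSum, ← sum_sub_distrib]
  simp only [← hv, ← mul_sub]
  convert sum_mul_sub_succ_eq_zero (fun i => f (e i))
    (fun k => ν (upSet e k) - ν (upSet e' k)) (by simp [upSet_zero])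
    (by simp [upSet_of_le]) ?_ using 3 with i
  · ring
  · intro i j hij
    refine (he (Fin.le_def.2 (by omega))).eq_or_lt.imp id fun hlt => ?_
    rw [upSet_eq_filter_lt he hij hlt, upSet_eq_filter_lt he' hij (by simpa [hv] using hlt), hv,
      sub_self]

end

theorem choquet_similarity_eq_measure_sub_dual_distance_general
    {I A : Type*} [Fintype A] [DecidableEq A] {n : ℕ}
    (val : A → I → ℝ)
    (μ : Finset A → ℝ) (hμ_empty : μ ∅ = 0)
    (x y : I)
    (e₁ : Fin n ≃ A) (hsort₁ : Monotone (fun i => 1 - |val (e₁ i) x - val (e₁ i) y|))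
    (e₂ : Fin n ≃ A) (hsort₂ : Monotone (fun i => |val (e₂ i) x - val (e₂ i) y|)) :
    choquetSum μ (fun a => 1 - |val a x - val a y|) e₁ =
      μ Finset.univ - choquetSum (dualMeasure μ) (fun a => |val a x - val a y|) e₂ := by
  set d : A → ℝ := fun a => |val a x - val a y|
  have hsort_rev : Monotone fun j => d ((Fin.revPerm.trans e₁) j) := fun j j' hjj' => by
    have := hsort₁ (Fin.rev_le_rev.2 hjj')
    simp only [Equiv.trans_apply, Fin.revPerm_apply, d] at this ⊢
    linarith
  rw [choquetSum_sub μ (fun _ => 1) d, choquetSum_const, hμ_empty,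
    ← choquetSum_dualMeasure_revPerm_trans, choquetSum_eq_of_monotone _ _ hsort_rev hsort₂]
  ring

/-- For attributes `a : X → [0,1]` in a finite nonempty set `𝒜` and a
monotone measure `μ` on `𝒜`, the Choquet similarity and Choquet distance satisfy
`R^μ(x,y) = μ(𝒜) − d^{μ̄}(x,y)`. Here the Choquet similarity
`R^μ(x,y) = ∫ (1 − |a(x) − a(y)|) dμ(a)` and the Choquet distance
`d^{μ̄}(x,y) = ∫ |a(x) − a(y)| dμ̄(a)` are Choquet integrals over the attributes. -/
theorem choquet_similarity_eq_measure_sub_dual_distance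
    {I A : Type*} [Fintype A] [DecidableEq A] {n : ℕ} (hn : 0 < n)
    (val : A → I → ℝ) (hval : ∀ a x, val a x ∈ Set.Icc (0 : ℝ) 1)
    (μ : Finset A → ℝ) (hμ_empty : μ ∅ = 0)
    (hμ_mono : ∀ S T : Finset A, S ⊆ T → μ S ≤ μ T)
    (x y : I)
    (e₁ : Fin n ≃ A) (hsort₁ : Monotone (fun i => 1 - |val (e₁ i) x - val (e₁ i) y|))
    (e₂ : Fin n ≃ A) (hsort₂ : Monotone (fun i => |val (e₂ i) x - val (e₂ i) y|)) :
    choquetSum μ (fun a => 1 - |val a x - val a y|) e₁ =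
      μ Finset.univ - choquetSum (dualMeasure μ) (fun a => |val a x - val a y|) e₂ :=
  choquet_similarity_eq_measure_sub_dual_distance_general val μ hμ_empty x y e₁ hsort₁ e₂ hsort₂
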